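/- Let f ∈ C_b^1(ℝ^d), π : ℝ^d × ℝ^d → [0,1] be Lipschitz in its first pair of arguments jointly with constant P̃, ρ a normalized radial density on ℝ^d, G a standard mollifier, α ∈ [0,1], and p_i ≥ 0 with ∑ p_i = 1. Then with F(y₁,y₂) = f(y₁)π(y₁,y₂), the difference |∫_{ℝ^{2d}} F(y₁,y₂) ρ(|y₁−y₂|) G_η(x − (αy₁ + (1−α)y₂)) dy₁dy₂ − ∫_{ℝ^d} F(w + x − αw, x − αw) ρ(|w|) dw| ≤ C(‖f‖_∞ P̃ + ‖∇f‖_∞) η for a constant C depending only on d and α. -/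

import Mathlib

open MeasureTheory

set_option maxHeartbeats 1000000 in
/-- Lemma 8.3, Case 2: the mollified unbinding placement density
`m^η(y₁,y₂|x) = ρ(|y₁−y₂|) G_η(x − (αy₁ + (1−α)y₂))`, integrated against
`F(y₁,y₂) = f(y₁) π(y₁,y₂)` with `f ∈ C_b^1` and `π` Lipschitz with constant `P`,
converges at rate `O(η)` to its δ-function limit
`∫ F(w + x − αw, x − αw) ρ(|w|) dw`, with a constant depending only on `d` and `α`. -/
theorem unbinding_placement_mollification {d : ℕ}
    (α : ℝ) (hα : α ∈ Set.Icc (0 : ℝ) 1) :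
    ∃ C : ℝ, ∀ (G : EuclideanSpace ℝ (Fin d) → ℝ),
      ContDiff ℝ (⊤ : ℕ∞) G → (∀ z, 0 ≤ G z) →
      Function.support G ⊆ Metric.closedBall 0 1 → (∫ z, G z) = 1 →
      ∀ (f : EuclideanSpace ℝ (Fin d) → ℝ) (B K : ℝ),
        ContDiff ℝ 1 f → (∀ y, |f y| ≤ B) → (∀ y, ‖fderiv ℝ f y‖ ≤ K) →
      ∀ (π : EuclideanSpace ℝ (Fin d) × EuclideanSpace ℝ (Fin d) → ℝ) (P : ℝ),
        (∀ v, π v ∈ Set.Icc (0 : ℝ) 1) → (∀ v v', |π v - π v'| ≤ P * ‖v - v'‖) →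
      ∀ (ρ : ℝ → ℝ), (∀ r, 0 ≤ ρ r) → Measurable ρ →
        (∫ w : EuclideanSpace ℝ (Fin d), ρ ‖w‖) = 1 →
      ∀ (x : EuclideanSpace ℝ (Fin d)) (η : ℝ), 0 < η →
      |(∫ y₁ : EuclideanSpace ℝ (Fin d), ∫ y₂ : EuclideanSpace ℝ (Fin d),
          (f y₁ * π (y₁, y₂)) *
            (ρ ‖y₁ - y₂‖ * ((η ^ d)⁻¹ * G (η⁻¹ • (x - (α • y₁ + (1 - α) • y₂)))))) -
        ∫ w : EuclideanSpace ℝ (Fin d),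
          (f (w + x - α • w) * π (w + x - α • w, x - α • w)) * ρ ‖w‖| ≤
      C * (B * P + K) * η := by
  rcases Nat.eq_zero_or_pos d with hd | hd
  · -- degenerate case `d = 0`
    subst hd
    refine ⟨0, ?_⟩
    intro G hGs hG0 hGsupp hG1 f B K hf hfB hfK π P hπ01 hπL ρ hρ0 hρm hρ1 x η hη
    have hsub : Subsingleton (EuclideanSpace ℝ (Fin 0)) := by infer_instance
    set κ := (volume (Set.univ : Set (EuclideanSpace ℝ (Fin 0)))).toReal with hκ
    have hconst : ∀ g : (EuclideanSpace ℝ (Fin 0)) → ℝ, (∫ z, g z) = κ * g 0 := by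
      intro g
      rw [show g = fun _ => g 0 from funext fun z => by rw [Subsingleton.elim z 0]]
      rw [integral_const]; simp [smul_eq_mul]; exact Or.inl rfl
    have hG0' : κ * G 0 = 1 := by rw [← hconst G, hG1]
    have e1 : (∫ y₁ : (EuclideanSpace ℝ (Fin 0)), ∫ y₂ : (EuclideanSpace ℝ (Fin 0)),
          (f y₁ * π (y₁, y₂)) *
            (ρ ‖y₁ - y₂‖ * ((η ^ 0)⁻¹ * G (η⁻¹ • (x - (α • y₁ + (1 - α) • y₂)))))) =
        κ * (κ * ((f 0 * π (0, 0)) * (ρ ‖(0 : (EuclideanSpace ℝ (Fin 0)))‖ * G 0))) := by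
      rw [hconst]
      congr 1
      rw [hconst]
      congr 1
      have h1 : (0 : (EuclideanSpace ℝ (Fin 0))) - 0 = 0 := by abel
      have h2 : (η⁻¹ • (x - (α • (0 : (EuclideanSpace ℝ (Fin 0))) + (1 - α) • 0))) = 0 := Subsingleton.elim _ _
      rw [h1, h2, pow_zero, inv_one, one_mul]
    have e2 : (∫ w : (EuclideanSpace ℝ (Fin 0)), (f (w + x - α • w) * π (w + x - α • w, x - α • w)) * ρ ‖w‖) =
        κ * ((f 0 * π (0, 0)) * ρ ‖(0 : (EuclideanSpace ℝ (Fin 0)))‖) := by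
      rw [hconst]
      congr 1
      have h1 : (0 : (EuclideanSpace ℝ (Fin 0))) + x - α • 0 = 0 := Subsingleton.elim _ _
      have h2 : x - α • (0 : (EuclideanSpace ℝ (Fin 0))) = 0 := Subsingleton.elim _ _
      rw [h1, h2]
    rw [e1, e2]
    have : κ * (κ * ((f 0 * π (0, 0)) * (ρ ‖(0 : (EuclideanSpace ℝ (Fin 0)))‖ * G 0))) =
        κ * ((f 0 * π (0, 0)) * ρ ‖(0 : (EuclideanSpace ℝ (Fin 0)))‖) * (κ * G 0) := by ring
    rw [this, hG0', mul_one, sub_self, abs_zero, zero_mul, zero_mul]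
  · -- main case `0 < d`
    refine ⟨1, ?_⟩
    intro G hGs hG0 hGsupp hG1 f B K hf hfB hfK π P hπ01 hπL ρ hρ0 hρm hρ1 x η hη
    -- basic positivity and continuity facts
    have hηd : (0:ℝ) < η ^ d := pow_pos hη d
    have hB : 0 ≤ B := le_trans (abs_nonneg _) (hfB 0)
    have hK : 0 ≤ K := le_trans (norm_nonneg _) (hfK 0)
    have hP : 0 ≤ P := by
      set v : (EuclideanSpace ℝ (Fin d)) := EuclideanSpace.single ⟨0, hd⟩ (1:ℝ) with hv
      have hvn : ‖v‖ = 1 := by rw [hv, EuclideanSpace.norm_single]; norm_num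
      have h := hπL (v, 0) (0, 0)
      have hn : ‖((v, (0:(EuclideanSpace ℝ (Fin d)))) : (EuclideanSpace ℝ (Fin d)) × (EuclideanSpace ℝ (Fin d))) - ((0:(EuclideanSpace ℝ (Fin d))), (0:(EuclideanSpace ℝ (Fin d))))‖ = 1 := by
        rw [Prod.mk_sub_mk, Prod.norm_def]
        simp [hvn]
      rw [hn, mul_one] at h
      exact le_trans (abs_nonneg _) h
    have hGc : Continuous G := hGs.continuous
    have hGcs : HasCompactSupport G := HasCompactSupport.intro (isCompact_closedBall 0 1)
      (fun z hz => by
        by_contra h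
        exact hz (hGsupp (Function.mem_support.2 h)))
    have hGint : Integrable G := hGc.integrable_of_hasCompactSupport hGcs
    have hfc : Continuous f := hf.continuous
    have hπc : Continuous π := by
      have : LipschitzWith (Real.toNNReal P) π := by
        apply LipschitzWith.of_dist_le_mul
        intro v v'
        rw [Real.dist_eq, Real.coe_toNNReal P hP]
        simpa [dist_eq_norm] using hπL v v'
      exact this.continuous
    have hρint : Integrable (fun w : (EuclideanSpace ℝ (Fin d)) => ρ ‖w‖) := by
      by_contra h
      rw [integral_undef h] at hρ1
      norm_num at hρ1
    have hfLip : ∀ a b : (EuclideanSpace ℝ (Fin d)), |f a - f b| ≤ K * ‖a - b‖ := by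
      intro a b
      have := (convex_univ : Convex ℝ (Set.univ : Set (EuclideanSpace ℝ (Fin d)))).norm_image_sub_le_of_norm_fderiv_le
        (fun y _ => (hf.differentiable one_ne_zero).differentiableAt) (fun y _ => hfK y)
        (Set.mem_univ b) (Set.mem_univ a)
      simpa [Real.norm_eq_abs] using this
    have hπabs : ∀ v, |π v| ≤ 1 := fun v =>
      abs_le.2 ⟨by linarith [(hπ01 v).1], (hπ01 v).2⟩
    -- the scaled mollifier integrates to η^d
    have hGscale : ∀ c : (EuclideanSpace ℝ (Fin d)), (∫ y : (EuclideanSpace ℝ (Fin d)), G (η⁻¹ • (c - y))) = η ^ d := by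
      intro c
      have h := integral_sub_left_eq_self (fun v : (EuclideanSpace ℝ (Fin d)) => G (η⁻¹ • v)) volume c
      rw [h, Measure.integral_comp_inv_smul volume G η, hG1, finrank_euclideanSpace_fin]
      simp [abs_of_pos hηd]
    have hGzero : ∀ (c : (EuclideanSpace ℝ (Fin d))) (y : (EuclideanSpace ℝ (Fin d))), y ∉ Metric.closedBall c η → G (η⁻¹ • (c - y)) = 0 := by
      intro c y hy
      apply Function.notMem_support.1
      intro hmem
      have h1 := hGsupp hmem
      rw [Metric.mem_closedBall, dist_zero_right, norm_smul, norm_inv, Real.norm_eq_abs,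
        abs_of_pos hη] at h1
      rw [Metric.mem_closedBall, dist_eq_norm] at hy
      have h2 : ‖c - y‖ ≤ η := by
        rw [inv_mul_le_iff₀ hη] at h1
        simpa [mul_comm] using h1
      rw [show y - c = -(c - y) by abel, norm_neg] at hy
      exact hy h2
    have hGball : ∀ u : (EuclideanSpace ℝ (Fin d)), G u ≠ 0 → ‖u‖ ≤ 1 := by
      intro u hu
      have := hGsupp (Function.mem_support.2 hu)
      rwa [Metric.mem_closedBall, dist_zero_right] at this
    -- the substituted integrand
    set Q : (EuclideanSpace ℝ (Fin d)) × (EuclideanSpace ℝ (Fin d)) → ℝ := fun p =>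
      (f p.1 * π (p.1, p.1 - p.2)) *
        (ρ ‖p.2‖ * ((η ^ d)⁻¹ * G (η⁻¹ • (x - p.1 + (1 - α) • p.2)))) with hQdef
    have hQapp : ∀ y₁ w : (EuclideanSpace ℝ (Fin d)), Q (y₁, w) =
        (f y₁ * π (y₁, y₁ - w)) *
          (ρ ‖w‖ * ((η ^ d)⁻¹ * G (η⁻¹ • (x - y₁ + (1 - α) • w)))) := fun _ _ => rfl
    -- Step A: substitute w = y₁ - y₂ in the inner integral
    have stepA : ∀ y₁ : (EuclideanSpace ℝ (Fin d)),
        (∫ y₂ : (EuclideanSpace ℝ (Fin d)), (f y₁ * π (y₁, y₂)) *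
          (ρ ‖y₁ - y₂‖ * ((η ^ d)⁻¹ * G (η⁻¹ • (x - (α • y₁ + (1 - α) • y₂)))))) =
        ∫ w : (EuclideanSpace ℝ (Fin d)), Q (y₁, w) := by
      intro y₁
      refine Eq.trans (integral_sub_left_eq_self (fun y₂ : (EuclideanSpace ℝ (Fin d)) => (f y₁ * π (y₁, y₂)) *
        (ρ ‖y₁ - y₂‖ * ((η ^ d)⁻¹ * G (η⁻¹ • (x - (α • y₁ + (1 - α) • y₂)))))) volume y₁).symm ?_
      refine integral_congr_ae (Filter.Eventually.of_forall fun w => ?_)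
      have h1 : y₁ - (y₁ - w) = w := by abel
      have h2 : x - (α • y₁ + (1 - α) • (y₁ - w)) = x - y₁ + (1 - α) • w := by module
      simp only [hQapp, h1, h2]
    -- measurability of Q
    have hQm : Measurable Q := by
      have m1 : Continuous fun p : (EuclideanSpace ℝ (Fin d)) × (EuclideanSpace ℝ (Fin d)) => f p.1 * π (p.1, p.1 - p.2) :=
        (hfc.comp continuous_fst).mul (hπc.comp (continuous_fst.prodMk
          (continuous_fst.sub continuous_snd)))
      have m2 : Measurable fun p : (EuclideanSpace ℝ (Fin d)) × (EuclideanSpace ℝ (Fin d)) => ρ ‖p.2‖ := hρm.comp measurable_snd.norm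
      have m3 : Continuous fun p : (EuclideanSpace ℝ (Fin d)) × (EuclideanSpace ℝ (Fin d)) => G (η⁻¹ • (x - p.1 + (1 - α) • p.2)) :=
        hGc.comp (by fun_prop)
      exact m1.measurable.mul (m2.mul (measurable_const.mul m3.measurable))
    -- sections of Q in the first variable are integrable
    have hsec : ∀ w : (EuclideanSpace ℝ (Fin d)), Integrable (fun y₁ : (EuclideanSpace ℝ (Fin d)) => Q (y₁, w)) := by
      intro w
      have hc : Continuous fun y₁ : (EuclideanSpace ℝ (Fin d)) =>
          (f y₁ * π (y₁, y₁ - w)) *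
            (ρ ‖w‖ * ((η ^ d)⁻¹ * G (η⁻¹ • (x - y₁ + (1 - α) • w)))) := by
        apply Continuous.mul
        · exact hfc.mul (hπc.comp (continuous_id.prodMk (continuous_id.sub continuous_const)))
        · exact continuous_const.mul (continuous_const.mul (hGc.comp
            (by fun_prop)))
      have hcs : HasCompactSupport fun y₁ : (EuclideanSpace ℝ (Fin d)) => Q (y₁, w) := by
        apply HasCompactSupport.intro (isCompact_closedBall (x + (1 - α) • w) η)
        intro y₁ hy₁
        have h0 : G (η⁻¹ • ((x + (1 - α) • w) - y₁)) = 0 := hGzero _ _ hy₁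
        have harg : x - y₁ + (1 - α) • w = (x + (1 - α) • w) - y₁ := by module
        rw [hQapp, harg, h0, mul_zero, mul_zero, mul_zero]
      exact Continuous.integrable_of_hasCompactSupport hc hcs
    -- bound on the integral of norms
    have hnormbd : ∀ w : (EuclideanSpace ℝ (Fin d)), (∫ y₁ : (EuclideanSpace ℝ (Fin d)), ‖Q (y₁, w)‖) ≤ B * ρ ‖w‖ := by
      intro w
      have hc : Continuous fun y₁ : (EuclideanSpace ℝ (Fin d)) => G (η⁻¹ • ((x + (1 - α) • w) - y₁)) :=
        hGc.comp (by fun_prop)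
      have hcs : HasCompactSupport fun y₁ : (EuclideanSpace ℝ (Fin d)) => G (η⁻¹ • ((x + (1 - α) • w) - y₁)) :=
        HasCompactSupport.intro (isCompact_closedBall (x + (1 - α) • w) η)
          (fun y₁ hy₁ => hGzero _ _ hy₁)
      have hgint0 : Integrable (fun y₁ : (EuclideanSpace ℝ (Fin d)) => G (η⁻¹ • ((x + (1 - α) • w) - y₁))) :=
        hc.integrable_of_hasCompactSupport hcs
      have hgint : Integrable (fun y₁ : (EuclideanSpace ℝ (Fin d)) =>
          (B * (ρ ‖w‖ * (η ^ d)⁻¹)) * G (η⁻¹ • ((x + (1 - α) • w) - y₁))) :=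
        hgint0.const_mul _
      have hle : ∀ y₁ : (EuclideanSpace ℝ (Fin d)), ‖Q (y₁, w)‖ ≤
          (B * (ρ ‖w‖ * (η ^ d)⁻¹)) * G (η⁻¹ • ((x + (1 - α) • w) - y₁)) := by
        intro y₁
        have harg : x - y₁ + (1 - α) • w = (x + (1 - α) • w) - y₁ := by module
        rw [hQapp, harg, Real.norm_eq_abs]
        have h1 : |f y₁ * π (y₁, y₁ - w)| ≤ B := by
          rw [abs_mul]
          calc |f y₁| * |π (y₁, y₁ - w)| ≤ B * 1 :=
                mul_le_mul (hfB y₁) (hπabs _) (abs_nonneg _) hB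
            _ = B := mul_one B
        have hnn : 0 ≤ ρ ‖w‖ * ((η ^ d)⁻¹ * G (η⁻¹ • (x + (1 - α) • w - y₁))) :=
          mul_nonneg (hρ0 _) (mul_nonneg (le_of_lt (inv_pos.2 hηd)) (hG0 _))
        rw [abs_mul, abs_of_nonneg hnn]
        calc |f y₁ * π (y₁, y₁ - w)| *
              (ρ ‖w‖ * ((η ^ d)⁻¹ * G (η⁻¹ • (x + (1 - α) • w - y₁))))
            ≤ B * (ρ ‖w‖ * ((η ^ d)⁻¹ * G (η⁻¹ • (x + (1 - α) • w - y₁)))) :=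
              mul_le_mul_of_nonneg_right h1 hnn
          _ = (B * (ρ ‖w‖ * (η ^ d)⁻¹)) * G (η⁻¹ • (x + (1 - α) • w - y₁)) := by ring
      calc (∫ y₁ : (EuclideanSpace ℝ (Fin d)), ‖Q (y₁, w)‖)
          ≤ ∫ y₁ : (EuclideanSpace ℝ (Fin d)), (B * (ρ ‖w‖ * (η ^ d)⁻¹)) * G (η⁻¹ • ((x + (1 - α) • w) - y₁)) :=
            integral_mono (hsec w).norm hgint hle
        _ = (B * (ρ ‖w‖ * (η ^ d)⁻¹)) * (η ^ d) := by
            rw [integral_const_mul, hGscale]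
        _ = B * ρ ‖w‖ := by field_simp
    -- Q is integrable on the product
    have hQint : Integrable Q (volume.prod volume) := by
      refine (integrable_prod_iff' hQm.aestronglyMeasurable).2
        ⟨Filter.Eventually.of_forall hsec, ?_⟩
      refine Integrable.mono' (hρint.const_mul B)
        (hQm.stronglyMeasurable.norm.integral_prod_left').aestronglyMeasurable
        (Filter.Eventually.of_forall fun w => ?_)
      rw [Real.norm_eq_abs, abs_of_nonneg (integral_nonneg fun y₁ => norm_nonneg _)]
      exact hnormbd w
    -- Fubini
    set T : (EuclideanSpace ℝ (Fin d)) → ℝ := fun w => ∫ y₁ : (EuclideanSpace ℝ (Fin d)), Q (y₁, w) with hTdef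
    have hswap : (∫ y₁ : (EuclideanSpace ℝ (Fin d)), ∫ w : (EuclideanSpace ℝ (Fin d)), Q (y₁, w)) = ∫ w : (EuclideanSpace ℝ (Fin d)), T w :=
      integral_integral_swap hQint
    have hTint : Integrable T := hQint.integral_prod_right
    -- Step C: rescale the y₁ integral
    have hTA : ∀ w : (EuclideanSpace ℝ (Fin d)), T w =
        ∫ u : (EuclideanSpace ℝ (Fin d)), (f ((x + (1 - α) • w) - η • u) *
          π ((x + (1 - α) • w) - η • u, (x - α • w) - η • u)) * (ρ ‖w‖ * G u) := by
      intro w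
      have e1 : T w = ∫ v : (EuclideanSpace ℝ (Fin d)), Q ((x + (1 - α) • w) - v, w) := by
        have h := integral_sub_left_eq_self (fun y₁ : (EuclideanSpace ℝ (Fin d)) => Q (y₁, w)) volume
          (x + (1 - α) • w)
        exact h.symm
      have e2 : (∫ v : (EuclideanSpace ℝ (Fin d)), Q ((x + (1 - α) • w) - v, w)) =
          (η ^ d) * ∫ u : (EuclideanSpace ℝ (Fin d)), Q ((x + (1 - α) • w) - η • u, w) := by
        have h := Measure.integral_comp_smul volume
          (fun v : (EuclideanSpace ℝ (Fin d)) => Q ((x + (1 - α) • w) - v, w)) η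
        simp only [smul_eq_mul] at h
        rw [(finrank_euclideanSpace_fin : Module.finrank ℝ (EuclideanSpace ℝ (Fin d)) = d)] at h
        rw [h, abs_of_pos (inv_pos.2 hηd)]
        field_simp
      have e3 : (∫ u : (EuclideanSpace ℝ (Fin d)), Q ((x + (1 - α) • w) - η • u, w)) =
          ∫ u : (EuclideanSpace ℝ (Fin d)), (f ((x + (1 - α) • w) - η • u) *
            π ((x + (1 - α) • w) - η • u, (x - α • w) - η • u)) *
            (ρ ‖w‖ * ((η ^ d)⁻¹ * G u)) := by
        refine integral_congr_ae (Filter.Eventually.of_forall fun u => ?_)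
        beta_reduce
        have h1 : ((x + (1 - α) • w) - η • u) - w = (x - α • w) - η • u := by module
        have h2 : x - ((x + (1 - α) • w) - η • u) + (1 - α) • w = η • u := by module
        have h3 : η⁻¹ • (η • u) = u := by
          rw [smul_smul, inv_mul_cancel₀ hη.ne', one_smul]
        rw [hQapp, h1, h2, h3]
      rw [e1, e2, e3, ← integral_const_mul]
      refine integral_congr_ae (Filter.Eventually.of_forall fun u => ?_)
      field_simp
    -- the limit integrand
    set J : (EuclideanSpace ℝ (Fin d)) → ℝ := fun w => (f (w + x - α • w) * π (w + x - α • w, x - α • w)) * ρ ‖w‖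
      with hJdef
    have hJapp : ∀ w : (EuclideanSpace ℝ (Fin d)), J w =
        (f (w + x - α • w) * π (w + x - α • w, x - α • w)) * ρ ‖w‖ := fun _ => rfl
    have hJint : Integrable J := by
      have hc1 : Continuous fun w : (EuclideanSpace ℝ (Fin d)) => w + x - α • w :=
        (continuous_id.add continuous_const).sub (continuous_id.const_smul α)
      have hc2 : Continuous fun w : (EuclideanSpace ℝ (Fin d)) => x - α • w :=
        continuous_const.sub (continuous_id.const_smul α)
      have hcont : Continuous fun w : (EuclideanSpace ℝ (Fin d)) =>
          f (w + x - α • w) * π (w + x - α • w, x - α • w) :=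
        (hfc.comp hc1).mul (hπc.comp (hc1.prodMk hc2))
      refine Integrable.mono' (hρint.const_mul B)
        ((hcont.measurable.mul (hρm.comp measurable_norm)).aestronglyMeasurable)
        (Filter.Eventually.of_forall fun w => ?_)
      rw [Real.norm_eq_abs, hJapp, abs_mul, abs_of_nonneg (hρ0 _)]
      apply mul_le_mul_of_nonneg_right _ (hρ0 _)
      rw [abs_mul]
      calc |f (w + x - α • w)| * |π (w + x - α • w, x - α • w)| ≤ B * 1 :=
            mul_le_mul (hfB _) (hπabs _) (abs_nonneg _) hB
        _ = B := mul_one B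
    -- pointwise bound on the difference
    have hpt : ∀ w : (EuclideanSpace ℝ (Fin d)), |T w - J w| ≤ ((B * P + K) * η) * ρ ‖w‖ := by
      intro w
      have haw : w + x - α • w = x + (1 - α) • w := by module
      have hJw : J w = ∫ u : (EuclideanSpace ℝ (Fin d)), (f (x + (1 - α) • w) *
          π (x + (1 - α) • w, x - α • w)) * (ρ ‖w‖ * G u) := by
        rw [hJapp, haw]
        rw [show (fun u : (EuclideanSpace ℝ (Fin d)) => (f (x + (1 - α) • w) * π (x + (1 - α) • w, x - α • w)) *
            (ρ ‖w‖ * G u)) =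
          fun u : (EuclideanSpace ℝ (Fin d)) => ((f (x + (1 - α) • w) * π (x + (1 - α) • w, x - α • w)) * ρ ‖w‖) * G u
          from funext fun u => by ring]
        rw [integral_const_mul, hG1, mul_one]
      have int1 : Integrable (fun u : (EuclideanSpace ℝ (Fin d)) =>
          (f ((x + (1 - α) • w) - η • u) *
            π ((x + (1 - α) • w) - η • u, (x - α • w) - η • u)) * (ρ ‖w‖ * G u)) := by
        have hc1 : Continuous fun u : (EuclideanSpace ℝ (Fin d)) => (x + (1 - α) • w) - η • u :=
          continuous_const.sub (continuous_id.const_smul η)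
        have hc2 : Continuous fun u : (EuclideanSpace ℝ (Fin d)) => (x - α • w) - η • u :=
          continuous_const.sub (continuous_id.const_smul η)
        have hc : Continuous fun u : (EuclideanSpace ℝ (Fin d)) =>
            (f ((x + (1 - α) • w) - η • u) *
              π ((x + (1 - α) • w) - η • u, (x - α • w) - η • u)) * (ρ ‖w‖ * G u) :=
          ((hfc.comp hc1).mul (hπc.comp (hc1.prodMk hc2))).mul
            (continuous_const.mul hGc)
        have hcs : HasCompactSupport fun u : (EuclideanSpace ℝ (Fin d)) =>
            (f ((x + (1 - α) • w) - η • u) *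
              π ((x + (1 - α) • w) - η • u, (x - α • w) - η • u)) * (ρ ‖w‖ * G u) := by
          apply HasCompactSupport.intro (isCompact_closedBall (0:(EuclideanSpace ℝ (Fin d))) 1)
          intro u hu
          have h0 : G u = 0 := by
            by_contra h
            exact hu (hGsupp (Function.mem_support.2 h))
          rw [h0, mul_zero, mul_zero]
        exact hc.integrable_of_hasCompactSupport hcs
      have int2 : Integrable (fun u : (EuclideanSpace ℝ (Fin d)) => (f (x + (1 - α) • w) *
          π (x + (1 - α) • w, x - α • w)) * (ρ ‖w‖ * G u)) :=
        (hGint.const_mul _).const_mul _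
      rw [hTA w, hJw, ← integral_sub int1 int2]
      have hdiff : ∀ u : (EuclideanSpace ℝ (Fin d)),
          |(f ((x + (1 - α) • w) - η • u) *
              π ((x + (1 - α) • w) - η • u, (x - α • w) - η • u)) * (ρ ‖w‖ * G u) -
            (f (x + (1 - α) • w) * π (x + (1 - α) • w, x - α • w)) * (ρ ‖w‖ * G u)| ≤
          (((B * P + K) * η) * ρ ‖w‖) * G u := by
        intro u
        by_cases hGu : G u = 0
        · rw [hGu, mul_zero, mul_zero, mul_zero, mul_zero, sub_self, abs_zero]
        · have hu1 : ‖u‖ ≤ 1 := hGball u hGu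
          have hπd : |π ((x + (1 - α) • w) - η • u, (x - α • w) - η • u) -
              π (x + (1 - α) • w, x - α • w)| ≤ P * (η * ‖u‖) := by
            have h := hπL ((x + (1 - α) • w) - η • u, (x - α • w) - η • u)
              (x + (1 - α) • w, x - α • w)
            have hnp : ‖((((x + (1 - α) • w) - η • u, (x - α • w) - η • u)) :
                (EuclideanSpace ℝ (Fin d)) × (EuclideanSpace ℝ (Fin d))) - (x + (1 - α) • w, x - α • w)‖ = η * ‖u‖ := by
              rw [Prod.mk_sub_mk]
              have g1 : ((x + (1 - α) • w) - η • u) - (x + (1 - α) • w) = -(η • u) := by abel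
              have g2 : ((x - α • w) - η • u) - (x - α • w) = -(η • u) := by abel
              rw [g1, g2, Prod.norm_def]
              simp only [norm_neg, norm_smul, Real.norm_eq_abs, abs_of_pos hη, max_self]
            rw [hnp] at h
            exact h
          have hfd : |f ((x + (1 - α) • w) - η • u) - f (x + (1 - α) • w)| ≤
              K * (η * ‖u‖) := by
            have h := hfLip ((x + (1 - α) • w) - η • u) (x + (1 - α) • w)
            have hg : ‖((x + (1 - α) • w) - η • u) - (x + (1 - α) • w)‖ = η * ‖u‖ := by
              rw [show ((x + (1 - α) • w) - η • u) - (x + (1 - α) • w) = -(η • u) by abel,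
                norm_neg, norm_smul, Real.norm_eq_abs, abs_of_pos hη]
            rw [hg] at h
            exact h
          have hmain : |f ((x + (1 - α) • w) - η • u) *
              π ((x + (1 - α) • w) - η • u, (x - α • w) - η • u) -
              f (x + (1 - α) • w) * π (x + (1 - α) • w, x - α • w)| ≤
              (B * P + K) * η := by
            have hdec : f ((x + (1 - α) • w) - η • u) *
                π ((x + (1 - α) • w) - η • u, (x - α • w) - η • u) -
                f (x + (1 - α) • w) * π (x + (1 - α) • w, x - α • w) =
                f ((x + (1 - α) • w) - η • u) *
                  (π ((x + (1 - α) • w) - η • u, (x - α • w) - η • u) -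
                    π (x + (1 - α) • w, x - α • w)) +
                π (x + (1 - α) • w, x - α • w) *
                  (f ((x + (1 - α) • w) - η • u) - f (x + (1 - α) • w)) := by ring
            rw [hdec]
            have h1 : |f ((x + (1 - α) • w) - η • u) *
                (π ((x + (1 - α) • w) - η • u, (x - α • w) - η • u) -
                  π (x + (1 - α) • w, x - α • w))| ≤ B * (P * (η * ‖u‖)) := by
              rw [abs_mul]
              exact mul_le_mul (hfB _) hπd (abs_nonneg _) hB
            have h2 : |π (x + (1 - α) • w, x - α • w) *
                (f ((x + (1 - α) • w) - η • u) - f (x + (1 - α) • w))| ≤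
                1 * (K * (η * ‖u‖)) := by
              rw [abs_mul]
              exact mul_le_mul (hπabs _) hfd (abs_nonneg _) zero_le_one
            have h3 := abs_add_le (f ((x + (1 - α) • w) - η • u) *
                (π ((x + (1 - α) • w) - η • u, (x - α • w) - η • u) -
                  π (x + (1 - α) • w, x - α • w)))
              (π (x + (1 - α) • w, x - α • w) *
                (f ((x + (1 - α) • w) - η • u) - f (x + (1 - α) • w)))
            nlinarith [norm_nonneg u, mul_nonneg (mul_nonneg hB hP) hη.le,
              mul_nonneg hK hη.le]
          have hfact : (f ((x + (1 - α) • w) - η • u) *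
              π ((x + (1 - α) • w) - η • u, (x - α • w) - η • u)) * (ρ ‖w‖ * G u) -
              (f (x + (1 - α) • w) * π (x + (1 - α) • w, x - α • w)) * (ρ ‖w‖ * G u) =
              (f ((x + (1 - α) • w) - η • u) *
                π ((x + (1 - α) • w) - η • u, (x - α • w) - η • u) -
                f (x + (1 - α) • w) * π (x + (1 - α) • w, x - α • w)) *
                (ρ ‖w‖ * G u) := by ring
          rw [hfact, abs_mul, abs_of_nonneg (mul_nonneg (hρ0 _) (hG0 u))]
          calc |f ((x + (1 - α) • w) - η • u) *
                π ((x + (1 - α) • w) - η • u, (x - α • w) - η • u) -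
                f (x + (1 - α) • w) * π (x + (1 - α) • w, x - α • w)| * (ρ ‖w‖ * G u)
              ≤ ((B * P + K) * η) * (ρ ‖w‖ * G u) :=
                mul_le_mul_of_nonneg_right hmain (mul_nonneg (hρ0 _) (hG0 u))
            _ = (((B * P + K) * η) * ρ ‖w‖) * G u := by ring
      calc |∫ u : (EuclideanSpace ℝ (Fin d)), ((f ((x + (1 - α) • w) - η • u) *
              π ((x + (1 - α) • w) - η • u, (x - α • w) - η • u)) * (ρ ‖w‖ * G u) -
              (f (x + (1 - α) • w) * π (x + (1 - α) • w, x - α • w)) * (ρ ‖w‖ * G u))|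
          ≤ ∫ u : (EuclideanSpace ℝ (Fin d)), |(f ((x + (1 - α) • w) - η • u) *
              π ((x + (1 - α) • w) - η • u, (x - α • w) - η • u)) * (ρ ‖w‖ * G u) -
              (f (x + (1 - α) • w) * π (x + (1 - α) • w, x - α • w)) * (ρ ‖w‖ * G u)| := by
            simpa [Real.norm_eq_abs] using
              norm_integral_le_integral_norm (μ := volume) (fun u : (EuclideanSpace ℝ (Fin d)) =>
                (f ((x + (1 - α) • w) - η • u) *
                  π ((x + (1 - α) • w) - η • u, (x - α • w) - η • u)) * (ρ ‖w‖ * G u) -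
                  (f (x + (1 - α) • w) * π (x + (1 - α) • w, x - α • w)) * (ρ ‖w‖ * G u))
        _ ≤ ∫ u : (EuclideanSpace ℝ (Fin d)), (((B * P + K) * η) * ρ ‖w‖) * G u :=
            integral_mono (int1.sub int2).abs (hGint.const_mul _) hdiff
        _ = (((B * P + K) * η) * ρ ‖w‖) * 1 := by rw [integral_const_mul, hG1]
        _ = ((B * P + K) * η) * ρ ‖w‖ := mul_one _
    -- final assembly
    have hLHS : (∫ y₁ : (EuclideanSpace ℝ (Fin d)), ∫ y₂ : (EuclideanSpace ℝ (Fin d)), (f y₁ * π (y₁, y₂)) *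
        (ρ ‖y₁ - y₂‖ * ((η ^ d)⁻¹ * G (η⁻¹ • (x - (α • y₁ + (1 - α) • y₂)))))) =
        ∫ w : (EuclideanSpace ℝ (Fin d)), T w := by
      rw [← hswap]
      exact integral_congr_ae (Filter.Eventually.of_forall stepA)
    rw [hLHS]
    have hJeq : (∫ w : (EuclideanSpace ℝ (Fin d)), (f (w + x - α • w) * π (w + x - α • w, x - α • w)) * ρ ‖w‖) =
        ∫ w : (EuclideanSpace ℝ (Fin d)), J w := rfl
    rw [hJeq]
    calc |(∫ w : (EuclideanSpace ℝ (Fin d)), T w) - ∫ w : (EuclideanSpace ℝ (Fin d)), J w|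
        = |∫ w : (EuclideanSpace ℝ (Fin d)), (T w - J w)| := by rw [integral_sub hTint hJint]
      _ ≤ ∫ w : (EuclideanSpace ℝ (Fin d)), |T w - J w| := by
          simpa [Real.norm_eq_abs] using
            norm_integral_le_integral_norm (μ := volume) (fun w : (EuclideanSpace ℝ (Fin d)) => T w - J w)
      _ ≤ ∫ w : (EuclideanSpace ℝ (Fin d)), ((B * P + K) * η) * ρ ‖w‖ :=
          integral_mono (hTint.sub hJint).abs (hρint.const_mul _) hpt
      _ = ((B * P + K) * η) * 1 := by rw [integral_const_mul, hρ1]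
      _ = 1 * (B * P + K) * η := by ring
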